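/- If a block ACI-matrix M = [[A, B], [0, C]] has A and C both square and FmR, then M is square and FmR. -/

import Mathlib

open MvPolynomial

/-- An ACI-matrix over a field `K`: entries are polynomials of total degree at most one
in indeterminates indexed by `ι`, and no indeterminate appears in two different columns. -/
structure ACIMatrix (K : Type) [Field K] (ι : Type) (m n : ℕ) where
  entry : Matrix (Fin m) (Fin n) (MvPolynomial ι K)
  deg_le : ∀ i j, (entry i j).totalDegree ≤ 1
  colIndep : ∀ (x : ι) (i i' : Fin m) (j j' : Fin n),
      x ∈ (entry i j).vars → x ∈ (entry i' j').vars → j = j'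

namespace ACIMatrix

variable {K : Type} [Field K] {ι : Type} {m n m' n' : ℕ}

/-- The constant matrix obtained by assigning values in `K` to all indeterminates. -/
noncomputable def completion (M : ACIMatrix K ι m n) (v : ι → K) : Matrix (Fin m) (Fin n) K :=
  fun i j => eval v (M.entry i j)

/-- The maximum rank of a completion of `M`. -/
noncomputable def maxRank (M : ACIMatrix K ι m n) : ℕ :=
  sSup {r | ∃ v : ι → K, (M.completion v).rank = r}

/-- Full row maxRank. -/
def FRmR (M : ACIMatrix K ι m n) : Prop := M.maxRank = m

/-- Full column maxRank. -/
def FCmR (M : ACIMatrix K ι m n) : Prop := M.maxRank = n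

/-- Full maxRank: some completion has full rank. -/
def FmR (M : ACIMatrix K ι m n) : Prop := M.maxRank = min m n

/-- A submatrix (with injective column selection) of an ACI-matrix is an ACI-matrix. -/
def subm (M : ACIMatrix K ι m n) (f : Fin m' → Fin m) (g : Fin n' → Fin n)
    (hg : Function.Injective g) : ACIMatrix K ι m' n' where
  entry := M.entry.submatrix f g
  deg_le := fun i j => M.deg_le _ _
  colIndep := fun x i i' j j' h h' => hg (M.colIndep x _ _ _ _ h h')

/-- The contiguous block of size `p × q` whose top-left corner is at row `r`, column `c`. -/
def block (M : ACIMatrix K ι m n) (r c p q : ℕ) (hr : r + p ≤ m) (hc : c + q ≤ n) :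
    ACIMatrix K ι p q :=
  M.subm (fun i => ⟨r + i.val, by omega⟩) (fun j => ⟨c + j.val, by omega⟩)
    (fun a b hab => Fin.ext (by
      have h : c + (a : ℕ) = c + (b : ℕ) := congrArg Fin.val hab
      omega))

/-- `M'` is equivalent to `M`:  `M' = R M Q` for a nonsingular constant matrix `R`
and a permutation `Q` of the columns. -/
def MEquiv (M M' : ACIMatrix K ι m n) : Prop :=
  ∃ (R : Matrix (Fin m) (Fin m) K) (σ : Equiv.Perm (Fin n)),
    IsUnit R ∧ M'.entry = ((R.map MvPolynomial.C) * M.entry).submatrix id ⇑σ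

/-- Transport an ACI-matrix along equalities of its dimensions. -/
def castSize (h : m = m') (h' : n = n') (M : ACIMatrix K ι m n) : ACIMatrix K ι m' n' :=
  M.subm (Fin.cast h.symm) (Fin.cast h'.symm)
    (fun a b hab => Fin.ext (by simpa using congrArg Fin.val hab))

theorem card_le_n {n : ℕ} (Fs : Finset (Fin n)) : Fs.card ≤ n :=
  (Finset.card_le_univ Fs).trans_eq (Finset.card_fin n)

/-- `Fs` is a factor set of `M`: some `R M Q_Fs = [[A,B],[0,C]]` with a Big zero block,
`A` (on the columns of `Fs`) FRmR and `C` FCmR. -/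
def IsFactorSet (M : ACIMatrix K ι m n) (Fs : Finset (Fin n)) : Prop :=
  ∃ (R : Matrix (Fin m) (Fin m) K) (σ : Equiv.Perm (Fin n)) (N : ACIMatrix K ι m n)
    (r : ℕ) (hr : r ≤ m),
    IsUnit R ∧
    (∀ j : Fin n, j ∈ Fs ↔ (σ j).val < Fs.card) ∧
    N.entry = ((R.map MvPolynomial.C) * M.entry).submatrix id ⇑σ.symm ∧
    (∀ (i : Fin m) (j : Fin n), m - r ≤ i.val → j.val < Fs.card → N.entry i j = 0) ∧
    r + Fs.card > max m n ∧
    (N.block 0 0 (m - r) Fs.card (by omega) (by have := card_le_n Fs; omega)).FRmR ∧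
    (N.block (m - r) Fs.card r (n - Fs.card) (by omega)
      (by have := card_le_n Fs; omega)).FCmR

/-- `Fs` is a semifactor set of `M`: as a factor set but with a Medium zero block. -/
def IsSemifactorSet (M : ACIMatrix K ι m n) (Fs : Finset (Fin n)) : Prop :=
  ∃ (R : Matrix (Fin m) (Fin m) K) (σ : Equiv.Perm (Fin n)) (N : ACIMatrix K ι m n)
    (r : ℕ) (hr : r ≤ m),
    IsUnit R ∧
    (∀ j : Fin n, j ∈ Fs ↔ (σ j).val < Fs.card) ∧
    N.entry = ((R.map MvPolynomial.C) * M.entry).submatrix id ⇑σ.symm ∧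
    (∀ (i : Fin m) (j : Fin n), m - r ≤ i.val → j.val < Fs.card → N.entry i j = 0) ∧
    r + Fs.card = max m n ∧
    (N.block 0 0 (m - r) Fs.card (by omega) (by have := card_le_n Fs; omega)).FRmR ∧
    (N.block (m - r) Fs.card r (n - Fs.card) (by omega)
      (by have := card_le_n Fs; omega)).FCmR

end ACIMatrix


open Matrix in
lemma aux_isUnit_of_rank_eq {n : ℕ} {K : Type} [Field K] (A : Matrix (Fin n) (Fin n) K)
    (h : A.rank = n) : IsUnit A := by
  rw [Matrix.isUnit_iff_isUnit_det, isUnit_iff_ne_zero]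
  intro hdet
  obtain ⟨v, hv, hmul⟩ := (Matrix.exists_mulVec_eq_zero_iff).mpr hdet
  -- rank + finrank ker = n, ker nontrivial
  have hker : v ∈ LinearMap.ker A.mulVecLin := hmul
  have hkpos : 0 < Module.finrank K (LinearMap.ker A.mulVecLin) := by
    rw [Module.finrank_pos_iff]
    exact nontrivial_of_ne ⟨v, hker⟩ 0 (by simpa [Subtype.ext_iff] using hv)
  have := LinearMap.finrank_range_add_finrank_ker A.mulVecLin
  rw [show Module.finrank K (Fin n → K) = n by simp] at this
  rw [Matrix.rank] at h
  omega

lemma aux_rank_of_isUnit' {n : ℕ} {K : Type} [Field K] (A : Matrix (Fin n) (Fin n) K)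
    (h : IsUnit A) : A.rank = n := by
  simpa using Matrix.rank_of_isUnit A h

/-- If `M = [[A,B],[0,C]]` with `A` and `C` square FmR, then `M` is square FmR. -/
theorem FmR_of_square_blocks {K : Type} [Field K] {ι : Type} {m₁ m₂ : ℕ}
    (M : ACIMatrix K ι (m₁ + m₂) (m₁ + m₂))
    (hz : ∀ (i j : Fin (m₁ + m₂)), m₁ ≤ i.val → j.val < m₁ → M.entry i j = 0)
    (hA : (M.block 0 0 m₁ m₁ (by omega) (by omega)).FmR)
    (hC : (M.block m₁ m₁ m₂ m₂ (by omega) (by omega)).FmR) :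
    M.FmR := by
  classical
  -- extract full-rank completions of the blocks
  have hmem : ∀ {p q : ℕ} (N : ACIMatrix K ι p q), N.FmR →
      ∃ v : ι → K, (N.completion v).rank = min p q := by
    intro p q N hN
    have hne : {r | ∃ v : ι → K, (N.completion v).rank = r}.Nonempty :=
      ⟨(N.completion 0).rank, 0, rfl⟩
    have hbdd : BddAbove {r | ∃ v : ι → K, (N.completion v).rank = r} := by
      refine ⟨min p q, ?_⟩
      rintro r ⟨v, rfl⟩
      refine le_min ?_ ?_
      · simpa using Matrix.rank_le_card_height (N.completion v)
      · simpa using Matrix.rank_le_card_width (N.completion v)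
    have := Nat.sSup_mem hne hbdd
    rw [show sSup {r | ∃ v : ι → K, (N.completion v).rank = r} = N.maxRank from rfl, hN] at this
    exact this
  obtain ⟨v₁, hv₁⟩ := hmem _ hA
  obtain ⟨v₂, hv₂⟩ := hmem _ hC
  simp only [min_self] at hv₁ hv₂
  -- combine the assignments
  set v : ι → K := fun x =>
    if ∃ i j : Fin (m₁ + m₂), j.val < m₁ ∧ x ∈ (M.entry i j).vars then v₁ x else v₂ x with hvdef
  have hvA : ∀ (i j : Fin (m₁ + m₂)), j.val < m₁ → ∀ x ∈ (M.entry i j).vars, v x = v₁ x := by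
    intro i j hj x hx
    simp only [hvdef]
    rw [if_pos ⟨i, j, hj, hx⟩]
  have hvC : ∀ (i j : Fin (m₁ + m₂)), m₁ ≤ j.val → ∀ x ∈ (M.entry i j).vars, v x = v₂ x := by
    intro i j hj x hx
    simp only [hvdef]
    rw [if_neg]
    rintro ⟨i', j', hj', hx'⟩
    have := M.colIndep x i' i j' j hx' hx
    omega
  have heval : ∀ (i j : Fin (m₁ + m₂)) (w : ι → K),
      (∀ x ∈ (M.entry i j).vars, v x = w x) → eval v (M.entry i j) = eval w (M.entry i j) := by
    intro i j w hw
    exact MvPolynomial.hom_congr_vars (by ext x; simp) (fun x hx _ => by simpa using hw x hx) rfl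
  -- block structure of the completion
  set P := M.completion v with hP
  set A₁ := (M.block 0 0 m₁ m₁ (by omega) (by omega)).completion v₁ with hA₁
  set C₁ := (M.block m₁ m₁ m₂ m₂ (by omega) (by omega)).completion v₂ with hC₁
  set B₁ : Matrix (Fin m₁) (Fin m₂) K :=
    fun i j => P (Fin.castAdd m₂ i) (Fin.natAdd m₁ j) with hB₁
  have hAentry : ∀ (i j : Fin m₁), (M.block 0 0 m₁ m₁ (by omega) (by omega)).entry i j
      = M.entry (Fin.castAdd m₂ i) (Fin.castAdd m₂ j) := by
    intro i j
    show M.entry _ _ = _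
    congr 1 <;> exact Fin.ext (by simp)
  have hCentry : ∀ (i j : Fin m₂), (M.block m₁ m₁ m₂ m₂ (by omega) (by omega)).entry i j
      = M.entry (Fin.natAdd m₁ i) (Fin.natAdd m₁ j) := by
    intro i j
    show M.entry _ _ = _
    congr 1 <;> exact Fin.ext (by simp)
  have hsub : P.submatrix finSumFinEquiv finSumFinEquiv = Matrix.fromBlocks A₁ B₁ 0 C₁ := by
    ext i j
    cases i with
    | inl i => cases j with
      | inl j =>
        simp only [Matrix.submatrix_apply, Matrix.fromBlocks_apply₁₁, finSumFinEquiv_apply_left]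
        show eval v (M.entry _ _) = eval v₁ ((M.block 0 0 m₁ m₁ _ _).entry i j)
        rw [hAentry]
        exact heval _ _ v₁ (fun x hx => hvA _ _ (by simpa using j.isLt) x hx)
      | inr j => simp [Matrix.submatrix_apply, hB₁]; rfl
    | inr i => cases j with
      | inl j =>
        simp only [Matrix.submatrix_apply, Matrix.fromBlocks_apply₂₁, finSumFinEquiv_apply_right,
          finSumFinEquiv_apply_left, Matrix.zero_apply]
        show eval v (M.entry _ _) = 0
        rw [hz _ _ (by simp) (by simpa using j.isLt)]
        simp
      | inr j =>
        simp only [Matrix.submatrix_apply, Matrix.fromBlocks_apply₂₂, finSumFinEquiv_apply_right]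
        show eval v (M.entry _ _) = eval v₂ ((M.block m₁ m₁ m₂ m₂ _ _).entry i j)
        rw [hCentry]
        exact heval _ _ v₂ (fun x hx => hvC _ _ (by simp) x hx)
  -- full rank
  have hAunit : IsUnit A₁ := aux_isUnit_of_rank_eq _ hv₁
  have hCunit : IsUnit C₁ := aux_isUnit_of_rank_eq _ hv₂
  have hdet : IsUnit (Matrix.fromBlocks A₁ B₁ 0 C₁).det := by
    rw [Matrix.det_fromBlocks_zero₂₁]
    exact ((Matrix.isUnit_iff_isUnit_det _).mp hAunit).mul
      ((Matrix.isUnit_iff_isUnit_det _).mp hCunit)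
  have hrankP : P.rank = m₁ + m₂ := by
    have h1 : (P.submatrix finSumFinEquiv finSumFinEquiv).rank = P.rank :=
      Matrix.rank_submatrix P finSumFinEquiv finSumFinEquiv
    rw [hsub] at h1
    rw [← h1]
    have := Matrix.rank_of_isUnit _ ((Matrix.isUnit_iff_isUnit_det _).mpr hdet)
    simpa using this
  -- conclude
  have hne : {r | ∃ w : ι → K, (M.completion w).rank = r}.Nonempty := ⟨P.rank, v, rfl⟩
  have hbdd : BddAbove {r | ∃ w : ι → K, (M.completion w).rank = r} := by
    refine ⟨m₁ + m₂, ?_⟩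
    rintro r ⟨w, rfl⟩
    simpa using Matrix.rank_le_card_width (M.completion w)
  rw [ACIMatrix.FmR, min_self]
  refine le_antisymm (csSup_le hne ?_) ?_
  · rintro r ⟨w, rfl⟩
    simpa using Matrix.rank_le_card_width (M.completion w)
  · exact le_csSup hbdd ⟨v, hrankP⟩
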